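/- In dimension d = 1, let m(x) = (α/2)x² for some α > 0. Then for every μ ∈ ℝ and σ > 0, the Fisher operator maps the Gaussian density γ_{μ,σ²} to a positive multiple of the Gaussian density γ_{μ̃,σ̃²}, where μ̃ = μ / (1 + α(1 + σ²/2)) and σ̃² = (1 + σ²/2) / (1 + α(1 + σ²/2)). -/

import Mathlib

/-!
Both halves of `T` preserve Gaussian shape. Completing the square in the exponent shows that
`∫ γ_{a,w}(x - c p) γ_{m,v}(p) dp = γ_{a + c m, w + c² v}(x)`; applying this once in each parent
(with `c = 1/2`) gives `R γ_{μ,σ²} = γ_{μ, 1 + σ²/2}`: the offspring trait is the parents' mean plus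
unit segregation noise. Selection multiplies by `exp(-α x²/2)`, and completing the square once more
turns `exp(-α x²/2) γ_{μ,s}` into a multiple of `γ_{μ/(1+αs), s/(1+αs)}`.
-/

open MeasureTheory

noncomputable section

/-- The Gaussian probability density on `ℝ` with mean `m` and variance `v`. -/
noncomputable def gauss1 (m v : ℝ) (x : ℝ) : ℝ :=
  (Real.sqrt (2 * Real.pi * v))⁻¹ * Real.exp (-(x - m) ^ 2 / (2 * v))

/-- Fisher's infinitesimal reproduction operator `R` on `ℝ`. -/
noncomputable def reprod1 (F : ℝ → ℝ) (x : ℝ) : ℝ :=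
  (∫ p : ℝ × ℝ, gauss1 0 1 (x - (p.1 + p.2) / 2) * F p.1 * F p.2) / (∫ y, |F y|)

/-- The one-dimensional Fisher infinitesimal model operator `T = S ∘ R`. -/
noncomputable def fisherT1 (m : ℝ → ℝ) (F : ℝ → ℝ) : ℝ → ℝ :=
  fun x => Real.exp (-(m x)) * reprod1 F x

open Real ProbabilityTheory

lemma gauss1_eq_gaussianPDFReal (m : ℝ) {v : ℝ} (hv : 0 ≤ v) :
    gauss1 m v = gaussianPDFReal m ⟨v, hv⟩ := rfl

lemma gauss1_nonneg (m v x : ℝ) : 0 ≤ gauss1 m v x := by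
  unfold gauss1; positivity

lemma gauss1_le (m : ℝ) {v : ℝ} (hv : 0 ≤ v) (x : ℝ) : gauss1 m v x ≤ (√(2 * π * v))⁻¹ :=
  mul_le_of_le_one_right (by positivity) <| exp_le_one_iff.mpr <|
    div_nonpos_of_nonpos_of_nonneg (neg_nonpos.mpr (sq_nonneg _)) (by positivity)

lemma continuous_gauss1 (m v : ℝ) : Continuous (gauss1 m v) := by
  unfold gauss1; fun_prop

lemma integrable_gauss1 (m : ℝ) {v : ℝ} (hv : 0 ≤ v) : Integrable (gauss1 m v) := by
  rw [gauss1_eq_gaussianPDFReal m hv]; exact integrable_gaussianPDFReal m _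

lemma integral_gauss1 (m : ℝ) {v : ℝ} (hv : 0 < v) : ∫ x, gauss1 m v x = 1 := by
  rw [gauss1_eq_gaussianPDFReal m hv.le]
  exact integral_gaussianPDFReal_eq_one m fun h => hv.ne' (congrArg Subtype.val h)

lemma gauss1_eq_abs_mul_gauss1_mul {c : ℝ} (hc : c ≠ 0) (m : ℝ) {v : ℝ} (hv : 0 ≤ v) (x : ℝ) :
    gauss1 m v x = |c| * gauss1 (c * m) (c ^ 2 * v) (c * x) := by
  have h := gaussianPDFReal_inv_mul (μ := m) (v := ⟨v, hv⟩) hc (c * x)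
  rwa [inv_mul_cancel_left₀ hc] at h

lemma gauss1_sub_mul_gauss1 (a b x t : ℝ) {v w : ℝ} (hv : 0 < v) (hw : 0 < w) :
    gauss1 a v (x - t) * gauss1 b w t
      = gauss1 (a + b) (v + w) x
          * gauss1 (((x - a) * w + b * v) / (v + w)) (v * w / (v + w)) t := by
  have hvw : 0 < v + w := add_pos hv hw
  have hsqrt : √(2 * π * v) * √(2 * π * w)
      = √(2 * π * (v + w)) * √(2 * π * (v * w / (v + w))) := by
    rw [← sqrt_mul (by positivity), ← sqrt_mul (by positivity)]
    congr 1
    field_simp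
  have hexp : -(x - t - a) ^ 2 / (2 * v) + -(t - b) ^ 2 / (2 * w)
      = -(x - (a + b)) ^ 2 / (2 * (v + w))
        + -(t - ((x - a) * w + b * v) / (v + w)) ^ 2 / (2 * (v * w / (v + w))) := by
    field_simp
    ring
  unfold gauss1
  rw [mul_mul_mul_comm, ← exp_add, ← mul_inv, hsqrt, hexp, exp_add, mul_inv]
  ring

lemma integral_gauss1_sub_mul_gauss1 (a b x : ℝ) {v w : ℝ} (hv : 0 < v) (hw : 0 < w) :
    ∫ t, gauss1 a v (x - t) * gauss1 b w t = gauss1 (a + b) (v + w) x := by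
  simp_rw [gauss1_sub_mul_gauss1 a b x _ hv hw]
  rw [integral_const_mul, integral_gauss1 _ (by positivity), mul_one]

lemma integral_gauss1_sub_mul_mul_gauss1 (a m x : ℝ) {c : ℝ} (hc : c ≠ 0) {v w : ℝ}
    (hv : 0 < v) (hw : 0 < w) :
    ∫ p, gauss1 a w (x - c * p) * gauss1 m v p = gauss1 (a + c * m) (w + c ^ 2 * v) x := by
  simp_rw [gauss1_eq_abs_mul_gauss1_mul hc m hv.le, mul_left_comm _ |c|]
  rw [integral_const_mul,
    Measure.integral_comp_mul_left (fun t => gauss1 a w (x - t) * gauss1 (c * m) (c ^ 2 * v) t),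
    integral_gauss1_sub_mul_gauss1 _ _ _ hw (by positivity), smul_eq_mul, ← mul_assoc,
    ← abs_mul, mul_inv_cancel₀ hc, abs_one, one_mul]

lemma integrable_reprod1_integrand {F : ℝ → ℝ} (hF : Integrable F) (x : ℝ) :
    Integrable fun p : ℝ × ℝ => gauss1 0 1 (x - (p.1 + p.2) / 2) * F p.1 * F p.2 := by
  simp_rw [mul_assoc]
  refine (hF.mul_prod hF).bdd_mul (c := (√(2 * π * 1))⁻¹) ?_ (.of_forall fun p => ?_)
  · exact ((continuous_gauss1 0 1).comp (by fun_prop)).aestronglyMeasurable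
  · rw [norm_of_nonneg (gauss1_nonneg _ _ _)]
    exact gauss1_le 0 zero_le_one _

lemma reprod1_gauss1 (μ : ℝ) {v : ℝ} (hv : 0 < v) :
    reprod1 (gauss1 μ v) = gauss1 μ (1 + v / 2) := by
  funext x
  have hmass : ∫ y, |gauss1 μ v y| = 1 := by
    simp_rw [abs_of_nonneg (gauss1_nonneg _ _ _)]
    exact integral_gauss1 μ hv
  have hinner : ∀ p₁, ∫ p₂, gauss1 0 1 (x - (p₁ + p₂) / 2) * gauss1 μ v p₁ * gauss1 μ v p₂
      = gauss1 (μ / 2) (1 + v / 4) (x - 2⁻¹ * p₁) * gauss1 μ v p₁ := by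
    intro p₁
    simp_rw [show ∀ p₂, x - (p₁ + p₂) / 2 = x - 2⁻¹ * p₁ - 2⁻¹ * p₂ by intro; ring,
      mul_right_comm _ (gauss1 μ v p₁)]
    rw [integral_mul_const, integral_gauss1_sub_mul_mul_gauss1 _ _ _ (by norm_num) hv one_pos]
    ring_nf
  rw [reprod1, hmass, div_one, Measure.volume_eq_prod,
    integral_prod _ (integrable_reprod1_integrand (integrable_gauss1 μ hv.le) x)]
  simp_rw [hinner]
  rw [integral_gauss1_sub_mul_mul_gauss1 _ _ _ (by norm_num) hv (by positivity)]
  ring_nf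

lemma exp_neg_mul_sq_mul_gauss1 (α μ x : ℝ) {s : ℝ} (hs : 0 < s) (hk : 0 < 1 + α * s) :
    exp (-(α / 2 * x ^ 2)) * gauss1 μ s x
      = exp (-(μ ^ 2 * α) / (2 * (1 + α * s))) * (√(1 + α * s))⁻¹
          * gauss1 (μ / (1 + α * s)) (s / (1 + α * s)) x := by
  set k := 1 + α * s with hk_def
  have hsqrt : √(2 * π * s) = √(2 * π * (s / k)) * √k := by
    rw [← sqrt_mul (by positivity)]
    field_simp
  have hexp : -(α / 2 * x ^ 2) + -(x - μ) ^ 2 / (2 * s)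
      = -(μ ^ 2 * α) / (2 * k) + -(x - μ / k) ^ 2 / (2 * (s / k)) := by
    field_simp
    rw [hk_def]
    ring
  unfold gauss1
  rw [mul_left_comm, ← exp_add, hexp, exp_add, hsqrt, mul_inv]
  ring

/-- For quadratic selection `m(x) = (α/2)x²` in dimension 1, the
Fisher operator maps the Gaussian `γ_{μ,σ²}` to a positive multiple of `γ_{μ̃,σ̃²}`,
with `μ̃ = μ/(1 + α(1 + σ²/2))` and `σ̃² = (1 + σ²/2)/(1 + α(1 + σ²/2))`. -/
theorem fisher_maps_gaussian_to_gaussian (α : ℝ) (hα : 0 < α) (μ σ : ℝ) (hσ : 0 < σ) :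
    ∃ c : ℝ, 0 < c ∧ ∀ x : ℝ,
      fisherT1 (fun y => α / 2 * y ^ 2) (gauss1 μ (σ ^ 2)) x
        = c * gauss1 (μ / (1 + α * (1 + σ ^ 2 / 2)))
            ((1 + σ ^ 2 / 2) / (1 + α * (1 + σ ^ 2 / 2))) x := by
  have hs : 0 < 1 + σ ^ 2 / 2 := by positivity
  have hk : 0 < 1 + α * (1 + σ ^ 2 / 2) := by positivity
  refine ⟨exp (-(μ ^ 2 * α) / (2 * (1 + α * (1 + σ ^ 2 / 2)))) * (√(1 + α * (1 + σ ^ 2 / 2)))⁻¹,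
    by positivity, fun x => ?_⟩
  rw [fisherT1, reprod1_gauss1 μ (by positivity)]
  exact exp_neg_mul_sq_mul_gauss1 α μ x hs hk

end
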